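/- arXiv:2603.01492 — 5 statements merged into one kernel-verified Lean document; each statement's English description precedes it below -/
import Mathlib

section
/- Let g, h1, h2 be continuous real-valued functions on open intervals such that g(A + B) = h1(A) + h2(B) for all A in a nondegenerate interval I1 and B in a nondegenerate interval I2. Then there exist constants β, α1, α2 ∈ ℝ such that g(s) = β s + (α1 + α2) for all s ∈ I1 + I2, h1(A) = β A + α1 for all A ∈ I1, and h2(B) = β B + α2 for all B ∈ I2. -/
/-!
Integrating the equation `g (x + t) = h₁ x + h₂ t` over `t ∈ [c, d]` expresses `(d - c) * h₁ x`
through a primitive `G` of `g` as `G (x + d) - G (x + c) - ∫ h₂`, so `h₁` is differentiable with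
derivative `(g (x + d) - g (x + c)) / (d - c) = slope h₂ c d`, which does not depend on `x`.
Hence `h₁` is affine with slope `slope h₂ c d`, symmetrically `h₂` is affine, and the two slopes
agree because `slope h₂ c d` is then the slope of `h₂` itself.
-/

open Set Pointwise

open Topology

theorem Set.Ioo_add_Ioo {𝕜 : Type*} [Field 𝕜] [LinearOrder 𝕜] [IsStrictOrderedRing 𝕜]
    {a₁ b₁ a₂ b₂ : 𝕜} (h₁ : a₁ < b₁) (h₂ : a₂ < b₂) :
    Ioo a₁ b₁ + Ioo a₂ b₂ = Ioo (a₁ + a₂) (b₁ + b₂) := by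
  refine Subset.antisymm ?_ fun s hs => ?_
  · rintro _ ⟨A, hA, B, hB, rfl⟩
    exact ⟨add_lt_add hA.1 hB.1, add_lt_add hA.2 hB.2⟩
  · obtain ⟨A, hA₁, hA₂⟩ : ∃ A, max a₁ (s - b₂) < A ∧ A < min b₁ (s - a₂) := by
      refine exists_between ?_
      simp only [max_lt_iff, lt_min_iff]
      refine ⟨⟨h₁, ?_⟩, ?_, ?_⟩ <;> linarith [hs.1, hs.2]
    rw [max_lt_iff] at hA₁
    rw [lt_min_iff] at hA₂
    exact ⟨A, ⟨hA₁.1, hA₂.1⟩, s - A, ⟨by linarith, by linarith⟩, add_sub_cancel _ _⟩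

theorem ContinuousOn.exists_forall_hasDerivAt {E : Type*} [NormedAddCommGroup E]
    [NormedSpace ℝ E] [CompleteSpace E] {g : ℝ → E} {s : Set ℝ} (hs : IsOpen s)
    (hs' : s.OrdConnected) (hg : ContinuousOn g s) :
    ∃ G : ℝ → E, ∀ x ∈ s, HasDerivAt G (g x) x := by
  rcases s.eq_empty_or_nonempty with rfl | ⟨x₀, hx₀⟩
  · exact ⟨0, fun x hx => hx.elim⟩
  refine ⟨fun x => ∫ t in x₀..x, g t, fun x hx => ?_⟩
  exact intervalIntegral.integral_hasDerivAt_right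
    (hg.mono (hs'.uIcc_subset hx₀ hx)).intervalIntegrable
    (hg.stronglyMeasurableAtFilter hs x hx) (hg.continuousAt (hs.mem_nhds hx))

theorem Set.OrdConnected.exists_eq_mul_add_of_hasDerivAt {f : ℝ → ℝ} {s : Set ℝ} {β : ℝ}
    (hs : s.OrdConnected) (hf : ∀ x ∈ s, HasDerivAt f β x) :
    ∃ α, ∀ x ∈ s, f x = β * x + α := by
  rcases s.eq_empty_or_nonempty with rfl | ⟨x₀, hx₀⟩
  · exact ⟨0, fun x hx => hx.elim⟩
  refine ⟨f x₀ - β * x₀, fun x hx => ?_⟩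
  have hFTC := intervalIntegral.integral_eq_sub_of_hasDerivAt
    (fun t ht => hf t (hs.uIcc_subset hx₀ hx ht)) intervalIntegrable_const
  rw [intervalIntegral.integral_const, smul_eq_mul] at hFTC
  linear_combination -hFTC

theorem hasDerivAt_slope_of_hasDerivAt_add {G h₁ h₂ : ℝ → ℝ} {U : Set ℝ} {c d x₀ : ℝ}
    (hU : U ∈ 𝓝 x₀) (hcd : c < d) (hh₂ : ContinuousOn h₂ (Icc c d))
    (hG : ∀ x ∈ U, ∀ t ∈ Icc c d, HasDerivAt G (h₁ x + h₂ t) (x + t)) :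
    HasDerivAt h₁ (slope h₂ c d) x₀ := by
  have hdc : d - c ≠ 0 := sub_ne_zero.2 hcd.ne'
  have hrepr : ∀ x ∈ U, h₁ x = (G (x + d) - G (x + c) - ∫ t in c..d, h₂ t) / (d - c) := by
    intro x hx
    have hFTC := intervalIntegral.integral_eq_sub_of_hasDerivAt
      (f := fun t => G (x + t)) (a := c) (b := d)
      (fun t ht => (hG x hx t (uIcc_of_le hcd.le ▸ ht)).comp_const_add x t)
      (intervalIntegrable_const.add (hh₂.intervalIntegrable_of_Icc hcd.le))
    rw [intervalIntegral.integral_add intervalIntegrable_const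
      (hh₂.intervalIntegrable_of_Icc hcd.le), intervalIntegral.integral_const,
      smul_eq_mul] at hFTC
    field_simp
    linear_combination hFTC
  have hx₀ := mem_of_mem_nhds hU
  have hderiv : ∀ t ∈ Icc c d, HasDerivAt (fun x => G (x + t)) (h₁ x₀ + h₂ t) x₀ :=
    fun t ht => (hG x₀ hx₀ t ht).comp_add_const x₀ t
  refine HasDerivAt.congr_of_eventuallyEq ?_ (Filter.eventually_of_mem hU hrepr)
  refine ((((hderiv d (right_mem_Icc.2 hcd.le)).sub
    (hderiv c (left_mem_Icc.2 hcd.le))).sub_const _).div_const _).congr_deriv ?_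
  rw [slope_def_field]
  ring

theorem hasDerivAt_slope_of_pexider {a₁ b₁ a₂ b₂ c d A : ℝ} {g h₁ h₂ : ℝ → ℝ}
    (ha : a₁ < b₁) (hb : a₂ < b₂)
    (hg : ContinuousOn g (Ioo a₁ b₁ + Ioo a₂ b₂)) (hh₂ : ContinuousOn h₂ (Ioo a₂ b₂))
    (heq : ∀ A ∈ Ioo a₁ b₁, ∀ B ∈ Ioo a₂ b₂, g (A + B) = h₁ A + h₂ B)
    (hc : c ∈ Ioo a₂ b₂) (hd : d ∈ Ioo a₂ b₂) (hcd : c < d) (hA : A ∈ Ioo a₁ b₁) :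
    HasDerivAt h₁ (slope h₂ c d) A := by
  have hsum := Ioo_add_Ioo ha hb
  obtain ⟨G, hG⟩ := hg.exists_forall_hasDerivAt (hsum ▸ isOpen_Ioo) (hsum ▸ ordConnected_Ioo)
  have hcdI : Icc c d ⊆ Ioo a₂ b₂ := ordConnected_Ioo.out hc hd
  refine hasDerivAt_slope_of_hasDerivAt_add (G := G) (isOpen_Ioo.mem_nhds hA) hcd
    (hh₂.mono hcdI) fun x hx t ht => ?_
  rw [← heq x hx t (hcdI ht)]
  exact hG _ (add_mem_add hx (hcdI ht))

/-- Pexider functional equation on intervals. -/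
theorem pexider_on_intervals
    (a₁ b₁ a₂ b₂ : ℝ) (h₁ : a₁ < b₁) (h₂ : a₂ < b₂)
    (g h1 h2 : ℝ → ℝ)
    (hg : ContinuousOn g (Ioo a₁ b₁ + Ioo a₂ b₂))
    (hh1 : ContinuousOn h1 (Ioo a₁ b₁))
    (hh2 : ContinuousOn h2 (Ioo a₂ b₂))
    (heq : ∀ A ∈ Ioo a₁ b₁, ∀ B ∈ Ioo a₂ b₂, g (A + B) = h1 A + h2 B) :
    ∃ β α₁ α₂ : ℝ,
      (∀ s ∈ Ioo a₁ b₁ + Ioo a₂ b₂, g s = β * s + (α₁ + α₂)) ∧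
      (∀ A ∈ Ioo a₁ b₁, h1 A = β * A + α₁) ∧
      (∀ B ∈ Ioo a₂ b₂, h2 B = β * B + α₂) := by
  obtain ⟨c₁, hc₁, d₁, hd₁, hcd₁⟩ := (Ioo_infinite h₁).nontrivial.exists_lt
  obtain ⟨c₂, hc₂, d₂, hd₂, hcd₂⟩ := (Ioo_infinite h₂).nontrivial.exists_lt
  obtain ⟨α₁, hα₁⟩ := ordConnected_Ioo.exists_eq_mul_add_of_hasDerivAt fun A hA =>
    hasDerivAt_slope_of_pexider h₁ h₂ hg hh2 heq hc₂ hd₂ hcd₂ hA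
  obtain ⟨α₂, hα₂⟩ := ordConnected_Ioo.exists_eq_mul_add_of_hasDerivAt fun B hB =>
    hasDerivAt_slope_of_pexider h₂ h₁ (add_comm (Ioo a₁ b₁) _ ▸ hg) hh1
      (fun B hB A hA => by rw [add_comm, heq A hA B hB, add_comm]) hc₁ hd₁ hcd₁ hB
  have hslope : slope h2 c₂ d₂ = slope h1 c₁ d₁ := by
    rw [slope_def_field, hα₂ c₂ hc₂, hα₂ d₂ hd₂]
    field_simp [sub_ne_zero.2 hcd₂.ne']
    ring
  refine ⟨slope h2 c₂ d₂, α₁, α₂, ?_, hα₁, hslope ▸ hα₂⟩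
  rintro _ ⟨A, hA, B, hB, rfl⟩
  rw [heq A hA B hB, hα₁ A hA, hα₂ B hB, hslope]
  ring
end

section
/- Let σ(y, u) = −1/(∂ψ/∂y)(y, u) > 0 be the demand elasticity derived from an inverse demand function ψ, let φ(y, u) = y + ψ(y, u) with ∂φ/∂y > 0 and ∂φ/∂u > 0, and suppose (∂φ/∂y)² + ∂²φ/∂y² > 0. Define φₜ-revenue composed with the optimal material demand as Φ(m, u) = φ(f(m) + M⁻¹(m, u), u). Then ∂Φ/∂u > 0 if and only if (∂φ/∂u)(∂σ/∂y) > (∂φ/∂y)(∂σ/∂u). -/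
/-!
Clearing the denominator `φy² + φyy > 0` turns `Φu` into a positive multiple of
`φu·φyy − φy·φyu`, while `σy` and `σu` are `φyy` and `φyu` scaled by the same positive factor
`(1 − φy)⁻²`; so both sides of the equivalence say `φy·φyu < φu·φyy`.
-/

lemma mul_neg_div_add_eq_div {φy φu φyy φyu : ℝ} (hD : φy ^ 2 + φyy ≠ 0) :
    φy * -((φy * φu + φyu) / (φy ^ 2 + φyy)) + φu =
      (φu * φyy - φy * φyu) / (φy ^ 2 + φyy) := by
  field_simp
  ring

theorem revenue_monotonicity_iff_general
    (φy φu φyy φyu σy σu Minvu Φu : ℝ)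
    (h2 : φy < 1)
    (hD : 0 < φy ^ 2 + φyy)
    (hσy : σy = φyy / (1 - φy) ^ 2)
    (hσu : σu = φyu / (1 - φy) ^ 2)
    (hMinvu : Minvu = -((φy * φu + φyu) / (φy ^ 2 + φyy)))
    (hΦu : Φu = φy * Minvu + φu) :
    0 < Φu ↔ φy * σu < φu * σy := by
  have hscale : 0 < (1 - φy) ^ 2 := pow_pos (sub_pos.2 h2) 2
  subst hΦu hMinvu hσy hσu
  rw [mul_neg_div_add_eq_div hD.ne', div_pos_iff_of_pos_right hD, sub_pos, ← mul_div_assoc,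
    ← mul_div_assoc, div_lt_div_iff_of_pos_right hscale]

/-- Monotonicity of the reduced-form revenue function in the demand shock:
with `σy = φyy/(1−φy)²`, `σu = φyu/(1−φy)²`, the control-function derivative
`Minvu = −(φy·φu + φyu)/(φy² + φyy)` and `Φu = φy·Minvu + φu`, one has
`Φu > 0` if and only if `φu·σy > φy·σu`. -/
theorem revenue_monotonicity_iff
    (φy φu φyy φyu σy σu Minvu Φu : ℝ)
    (h1 : 0 < φy) (h2 : φy < 1) (h3 : 0 < φu)
    (hD : 0 < φy ^ 2 + φyy)
    (hσy : σy = φyy / (1 - φy) ^ 2)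
    (hσu : σu = φyu / (1 - φy) ^ 2)
    (hMinvu : Minvu = -((φy * φu + φyu) / (φy ^ 2 + φyy)))
    (hΦu : Φu = φy * Minvu + φu) :
    0 < Φu ↔ φy * σu < φu * σy :=
  revenue_monotonicity_iff_general φy φu φyy φyu σy σu Minvu Φu h2 hD hσy hσu hMinvu hΦu
end

section
/- Suppose the first-order condition for materials holds: ∂f/∂m = (∂φ⁻¹/∂r) · exp(pᵐ + m − r), and the chain-rule identity (∂φ⁻¹/∂r)·(∂Φ/∂m) = ∂f/∂m + ∂M⁻¹/∂m holds, where Φ(m,w,u) is the reduced-form revenue function. If ∂Φ/∂m ≠ exp(pᵐ + m − r), then the markup μ = ∂φ⁻¹/∂r is uniquely determined as μ = (∂M⁻¹/∂m) / (∂Φ/∂m − exp(pᵐ + m − r)). -/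
/-- Identification of the markup from the first-order condition for materials
and the chain-rule identity: `μ = (∂M⁻¹/∂m)/(∂Φ/∂m − exp(pᵐ + m − r))`. -/
theorem markup_from_foc
    (fm μ Φm Mm pm m r : ℝ)
    (hfoc : fm = μ * Real.exp (pm + m - r))
    (hchain : μ * Φm = fm + Mm)
    (hne : Φm ≠ Real.exp (pm + m - r)) :
    μ = Mm / (Φm - Real.exp (pm + m - r)) := by
  have hmarkup : μ * (Φm - Real.exp (pm + m - r)) = Mm := by
    rw [mul_sub, hchain, hfoc]
    ring
  exact eq_div_of_mul_eq (sub_ne_zero.mpr hne) hmarkup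
end

section
/- Let 𝔰(y, ε) = δ − (1/β)·ln((exp(−βy + γ) + ε)/(1 + ε)) with β > 0, ε > 0. Then the implied markup P/MC = (∂φ/∂y)⁻¹, where φ(y, ε) = Φ + 𝔰(y, ε), equals 1 + ε·exp(βy − γ). Moreover, as β → 0⁺ with y fixed, φ(y, ε) → Φ + δ + y/(1 + ε) (i.e., the CoPaTh revenue function converges to the CES revenue function with slope ρ = 1/(1+ε)). -/
/-!
Differentiating under the logarithm, `-(1/β) · ∂_y ln(e^{-βy+γ} + ε) = e^{-βy+γ} / (e^{-βy+γ} + ε)`,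
whose reciprocal is `1 + ε e^{βy-γ}`. For the CES limit, `ψ(β) = ln((e^{-βy} + ε)/(1 + ε))`
vanishes at `β = 0`, so `ψ(β)/β` is a difference quotient and tends to `ψ'(0) = -y/(1 + ε)`.
-/

open Filter Topology Real

theorem HasDerivAt.log_exp_add_div {u : ℝ → ℝ} {u' x : ℝ} (ε : ℝ) {c : ℝ}
    (hu : HasDerivAt u u' x) (hx : Real.exp (u x) + ε ≠ 0) (hc : c ≠ 0) :
    HasDerivAt (fun t => Real.log ((Real.exp (u t) + ε) / c))
      (u' * Real.exp (u x) / (Real.exp (u x) + ε)) x := by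
  refine (((hu.exp.add_const ε).div_const c).log (div_ne_zero hx hc)).congr_deriv ?_
  field_simp

theorem inv_exp_div_exp_add (x ε : ℝ) :
    (exp x / (exp x + ε))⁻¹ = 1 + ε * exp (-x) := by
  rw [inv_div, exp_neg]
  field_simp

theorem HasDerivAt.tendsto_div_self_nhdsGT_zero {f : ℝ → ℝ} {f' : ℝ}
    (hf : HasDerivAt f f' 0) (hf₀ : f 0 = 0) :
    Tendsto (fun t => (1 / t) * f t) (𝓝[>] 0) (𝓝 f') := by
  simpa [hf₀] using hf.tendsto_slope_zero_right

/-- CoPaTh-HSA revenue function: the implied markup is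
`1 + ε·exp(βy − γ)`, and as `β → 0⁺` (with `γ = 0`) the revenue function
converges to the CES revenue function with slope `1/(1+ε)`. -/
theorem copath_markup_and_ces_limit
    (Φ δ : ℝ) (ε : ℝ) (hε : 0 < ε) (y : ℝ) :
    (∀ β γ : ℝ, 0 < β →
      HasDerivAt (fun y' => Φ + δ - (1 / β) *
          Real.log ((Real.exp (-β * y' + γ) + ε) / (1 + ε)))
        (Real.exp (-β * y + γ) / (Real.exp (-β * y + γ) + ε)) y ∧
      (Real.exp (-β * y + γ) / (Real.exp (-β * y + γ) + ε))⁻¹ =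
        1 + ε * Real.exp (β * y - γ)) ∧
    Tendsto (fun β : ℝ => Φ + δ - (1 / β) *
        Real.log ((Real.exp (-β * y) + ε) / (1 + ε)))
      (𝓝[>] 0) (𝓝 (Φ + δ + y / (1 + ε))) := by
  have h1ε : 1 + ε ≠ 0 := by positivity
  refine ⟨fun β γ hβ => ⟨?_, ?_⟩, ?_⟩
  · have hlog := (((hasDerivAt_id' y).const_mul (-β)).add_const γ).log_exp_add_div ε
      (by positivity) h1ε
    refine ((hlog.const_mul (1 / β)).const_sub (Φ + δ)).congr_deriv ?_
    field_simp
  · rw [inv_exp_div_exp_add, neg_add, neg_mul, neg_neg, ← sub_eq_add_neg]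
  · have hlog := ((hasDerivAt_neg (0 : ℝ)).mul_const y).log_exp_add_div ε
      (by positivity) h1ε
    convert tendsto_const_nhds.sub (hlog.tendsto_div_self_nhdsGT_zero (by simp [h1ε])) using 2
    simp only [neg_zero, zero_mul, exp_zero]
    ring
end

section
/- Under the HDIA demand system, let Υ* satisfy ∂Υ*(x, z, u)/∂x = exp(υ*(x, z, u)) and suppose the adding-up constraint Σᵢ Υ*(yᵢ − a(y), zᵢ, uᵢ) = 1 holds at both the baseline state y and a new state ỹ. Define the reduced form υ(ζ, z, u) = υ*(ζ − a(y), z, u) − b(y). Then Σᵢ ∫_{yᵢ}^{ỹᵢ − Δa} exp(υ(ζ, zᵢ, uᵢ)) dζ = 0, where Δa = a(ỹ) − a(y); moreover, since each integrand is strictly positive, the left-hand side is strictly decreasing in Δa, so Δa is the unique root of this equation. -/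
/-!
Each integrand `exp (υ (ζ - a) - b)` is `exp (-b)` times the derivative of `ζ ↦ Υ (ζ - a)`,
so by the fundamental theorem of calculus the left-hand side equals
`(∑ᵢ Υ (ỹᵢ - d - a(y)) - ∑ᵢ Υ (yᵢ - a(y))) / exp b`. The adding-up constraint at `y` turns the
second sum into `1`, and at `ỹ` it makes the first sum `1` when `d = Δa`. Since `Υ` is strictly
increasing (its derivative is an exponential), the closed form is strictly decreasing in `d`.
-/

open intervalIntegral

open Real Set

theorem intervalIntegral.integral_eq_sub_of_hasDerivAt_of_nonneg {F f : ℝ → ℝ} {a b : ℝ}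
    (hF : ∀ x ∈ uIcc a b, HasDerivAt F (f x) x)
    (hf : ∀ x ∈ Ioo (min a b) (max a b), 0 ≤ f x) :
    ∫ x in a..b, f x = F b - F a :=
  integral_eq_sub_of_hasDerivAt hF <|
    intervalIntegrable_deriv_of_nonneg (fun x hx => (hF x hx).continuousAt.continuousWithinAt)
      (fun x hx => hF x (Ioo_subset_Icc_self hx)) hf

theorem integral_exp_comp_sub_sub {G g : ℝ → ℝ} (hG : ∀ x, HasDerivAt G (exp (g x)) x)
    (a b c β : ℝ) :
    ∫ ζ in a..b, exp (g (ζ - c) - β) = (G (b - c) - G (a - c)) / exp β := by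
  simp_rw [exp_sub, integral_div, integral_comp_sub_right fun ζ => exp (g ζ)]
  rw [integral_eq_sub_of_hasDerivAt_of_nonneg (fun x _ => hG x) fun x _ => (exp_pos _).le]

theorem hdia_aggregator_general
    (N : ℕ)
    (Υ υ : ℝ → ℝ → ℝ → ℝ)
    (z u : Fin N → ℝ) (y ytil : Fin N → ℝ)
    (abase anew bconst : ℝ)
    (hderiv : ∀ (i : Fin N) (x : ℝ),
      HasDerivAt (fun x' => Υ x' (z i) (u i)) (Real.exp (υ x (z i) (u i))) x)
    (hbase : ∑ i, Υ (y i - abase) (z i) (u i) = 1)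
    (hnew : ∑ i, Υ (ytil i - anew) (z i) (u i) = 1) :
    (∑ i, ∫ ζ in (y i)..(ytil i - (anew - abase)),
        Real.exp (υ (ζ - abase) (z i) (u i) - bconst)) = 0 ∧
    StrictAnti (fun d => ∑ i, ∫ ζ in (y i)..(ytil i - d),
        Real.exp (υ (ζ - abase) (z i) (u i) - bconst)) ∧
    ∀ d, (∑ i, ∫ ζ in (y i)..(ytil i - d),
        Real.exp (υ (ζ - abase) (z i) (u i) - bconst)) = 0 →
      d = anew - abase := by
  have hclosed : ∀ d, (∑ i, ∫ ζ in (y i)..(ytil i - d),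
      exp (υ (ζ - abase) (z i) (u i) - bconst)) =
        ((∑ i, Υ (ytil i - d - abase) (z i) (u i)) - 1) / exp bconst := by
    intro d
    simp_rw [integral_exp_comp_sub_sub (hderiv _), ← Finset.sum_div, Finset.sum_sub_distrib,
      hbase]
  have hzero : (∑ i, ∫ ζ in (y i)..(ytil i - (anew - abase)),
      exp (υ (ζ - abase) (z i) (u i) - bconst)) = 0 := by
    simp_rw [hclosed, sub_sub, sub_add_cancel, hnew, sub_self, zero_div]
  have hΥ : ∀ i, StrictMono fun x => Υ x (z i) (u i) :=
    fun i => strictMono_of_hasDerivAt_pos (hderiv i) fun _ => exp_pos _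
  have hanti : StrictAnti fun d => ∑ i, ∫ ζ in (y i)..(ytil i - d),
      exp (υ (ζ - abase) (z i) (u i) - bconst) := by
    intro d₁ d₂ hd
    simp only [hclosed]
    gcongr with i
    · exact Finset.nonempty_of_sum_ne_zero (hnew.trans_ne one_ne_zero)
    · exact hΥ i (by linarith)
  exact ⟨hzero, hanti, fun d hd => hanti.injective (hd.trans hzero.symm)⟩

/-- HDIA aggregator: with `Υ` an antiderivative of `exp(υ)` in its first
argument and the adding-up constraint holding at both the baseline and the
new state, the sum of integrals of the reduced-form shares from `yᵢ` to
`ỹᵢ − Δa` vanishes; moreover the map in `d` is strictly decreasing, so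
`Δa = a(ỹ) − a(y)` is its unique root. -/
theorem hdia_aggregator
    (N : ℕ) (hN : 0 < N)
    (Υ υ : ℝ → ℝ → ℝ → ℝ)
    (z u : Fin N → ℝ) (y ytil : Fin N → ℝ)
    (abase anew bconst : ℝ)
    (hderiv : ∀ (i : Fin N) (x : ℝ),
      HasDerivAt (fun x' => Υ x' (z i) (u i)) (Real.exp (υ x (z i) (u i))) x)
    (hυc : ∀ i : Fin N, Continuous (fun x => υ x (z i) (u i)))
    (hbase : ∑ i, Υ (y i - abase) (z i) (u i) = 1)
    (hnew : ∑ i, Υ (ytil i - anew) (z i) (u i) = 1) :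
    (∑ i, ∫ ζ in (y i)..(ytil i - (anew - abase)),
        Real.exp (υ (ζ - abase) (z i) (u i) - bconst)) = 0 ∧
    StrictAnti (fun d => ∑ i, ∫ ζ in (y i)..(ytil i - d),
        Real.exp (υ (ζ - abase) (z i) (u i) - bconst)) ∧
    ∀ d, (∑ i, ∫ ζ in (y i)..(ytil i - d),
        Real.exp (υ (ζ - abase) (z i) (u i) - bconst)) = 0 →
      d = anew - abase :=
  hdia_aggregator_general N Υ υ z u y ytil abase anew bconst hderiv hbase hnew
end
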